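/- Let n ≥ 1 be an integer. Then there exists a constant C such that for all nonnegative functions A_1, A_2 on ℤ^n, Σ_{ν_1, ν_2 ∈ ℤ^n} (1 + |ν_1| + |ν_2|)^{−n} A_1(ν_1) A_2(ν_2) ≤ C ‖A_1‖_{ℓ²(ℤ^n)} ‖A_2‖_{ℓ²(ℤ^n)}. -/

import Mathlib

open MeasureTheory Complex Real SchwartzMap
open scoped ENNReal NNReal BigOperators RealInnerProductSpace

noncomputable section

/-- `ℝ^n` with the Euclidean norm. -/
abbrev Rn (n : ℕ) : Type := EuclideanSpace ℝ (Fin n)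

/-- Fourier transform with the convention `f̂(ξ) = ∫ e^{-i ξ·x} f(x) dx`. -/
def ft (n : ℕ) (f : Rn n → ℂ) (ξ : Rn n) : ℂ :=
  ∫ x : Rn n, Complex.exp (-Complex.I * ((⟪ξ, x⟫ : ℝ) : ℂ)) * f x

/-- Inverse Fourier transform `F⁻¹g(x) = (2π)^{-n} ∫ e^{i x·ξ} g(ξ) dξ`. -/
def invFt (n : ℕ) (g : Rn n → ℂ) (x : Rn n) : ℂ :=
  (((2 * π) ^ n : ℝ) : ℂ)⁻¹ * ∫ ξ : Rn n, Complex.exp (Complex.I * ((⟪x, ξ⟫ : ℝ) : ℂ)) * g ξ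

/-- The `N`-linear pseudo-differential operator `T_σ` with `x`-dependent symbol. -/
def pdo (n N : ℕ) (σ : Rn n × (Fin N → Rn n) → ℂ) (f : Fin N → 𝓢(Rn n, ℂ)) (x : Rn n) : ℂ :=
  (((2 * π) ^ (N * n) : ℝ) : ℂ)⁻¹ *
    ∫ ξ : Fin N → Rn n,
      Complex.exp (Complex.I * ((∑ j, ⟪x, ξ j⟫ : ℝ) : ℂ)) * σ (x, ξ) * ∏ j, ft n ⇑(f j) (ξ j)

/-- The `N`-linear Fourier multiplier operator `T_σ` (`x`-independent symbol). -/
def pdoX (n N : ℕ) (σ : (Fin N → Rn n) → ℂ) (f : Fin N → 𝓢(Rn n, ℂ)) (x : Rn n) : ℂ :=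
  (((2 * π) ^ (N * n) : ℝ) : ℂ)⁻¹ *
    ∫ ξ : Fin N → Rn n,
      Complex.exp (Complex.I * ((∑ j, ⟪x, ξ j⟫ : ℝ) : ℂ)) * σ ξ * ∏ j, ft n ⇑(f j) (ξ j)

/-- The multilinear Hörmander class `S^m_{0,0}(ℝ^n, N)`. -/
def SymbolClassS (n N : ℕ) (m : ℝ) (σ : Rn n × (Fin N → Rn n) → ℂ) : Prop :=
  ContDiff ℝ (⊤ : ℕ∞) σ ∧
    ∀ k : ℕ, ∃ C : ℝ, ∀ (x : Rn n) (ξ : Fin N → Rn n),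
      ‖iteratedFDeriv ℝ k σ (x, ξ)‖ ≤ C * (1 + ∑ j, ‖ξ j‖) ^ m

/-- The class `S^{m⃗}_{0,0}(ℝ^n, N)` with a vector of orders. -/
def SymbolClassV (n N : ℕ) (m : Fin N → ℝ) (σ : Rn n × (Fin N → Rn n) → ℂ) : Prop :=
  ContDiff ℝ (⊤ : ℕ∞) σ ∧
    ∀ k : ℕ, ∃ C : ℝ, ∀ (x : Rn n) (ξ : Fin N → Rn n),
      ‖iteratedFDeriv ℝ k σ (x, ξ)‖ ≤ C * ∏ j, (1 + ‖ξ j‖) ^ (m j)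

/-- The class `S^m_{0,0}(ℝ^n, N)^×` of `x`-independent symbols (multipliers). -/
def MultClassS (n N : ℕ) (m : ℝ) (σ : (Fin N → Rn n) → ℂ) : Prop :=
  ContDiff ℝ (⊤ : ℕ∞) σ ∧
    ∀ k : ℕ, ∃ C : ℝ, ∀ ξ : Fin N → Rn n,
      ‖iteratedFDeriv ℝ k σ ξ‖ ≤ C * (1 + ∑ j, ‖ξ j‖) ^ m

/-- Euclidean norm of a lattice point in `ℤ^n`. -/
def zn (n : ℕ) (ν : Fin n → ℤ) : ℝ := Real.sqrt (∑ i, ((ν i : ℝ)) ^ 2)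

/-- Embedding of `ℤ^n` into `ℝ^n`. -/
def zv (n : ℕ) (k : Fin n → ℤ) : Rn n := WithLp.toLp 2 (fun i => (k i : ℝ))

/-!
Since `|ν i| ≤ |ν|`, the kernel `(1 + |ν₁| + |ν₂|)^{-n}` is dominated by the tensor product
`∏ i, (1 + |ν₁ i| + |ν₂ i|)⁻¹` of one-dimensional Hilbert kernels. The one-dimensional kernel passes
Schur's test with the weight `w b = (1 + |b|)^{-1/2}`: the weighted row sum
`∑_b (1 + |a| + |b|)⁻¹ w b` is at most `16 w a`, by comparison with a telescoping sum. Tensoring,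
the product weight passes Schur's test for the `n`-dimensional kernel with constant `16 ^ n`, and
Schur's test (Cauchy–Schwarz after splitting the kernel with the weights) gives the bound.
-/

theorem ENNReal.tsum_mul_le_tsum_sq_rpow_mul {α : Type*} [Countable α] (f g : α → ℝ≥0∞) :
    ∑' a, f a * g a ≤ (∑' a, f a ^ 2) ^ (1 / 2 : ℝ) * (∑' a, g a ^ 2) ^ (1 / 2 : ℝ) := by
  let : MeasurableSpace α := ⊤
  simpa [lintegral_count, ENNReal.rpow_two] using
    ENNReal.lintegral_mul_le_Lp_mul_Lq Measure.count Real.HolderConjugate.two_two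
      (measurable_from_top (f := f)).aemeasurable (measurable_from_top (f := g)).aemeasurable

lemma ENNReal.rpow_one_half_sq (x : ℝ≥0∞) : (x ^ (1 / 2 : ℝ)) ^ 2 = x := by
  simpa using ENNReal.rpow_inv_natCast_pow two_ne_zero x

lemma ENNReal.sq_rpow_one_half (x : ℝ≥0∞) : (x ^ 2) ^ (1 / 2 : ℝ) = x := by
  simpa using ENNReal.pow_rpow_inv_natCast two_ne_zero x

section Schur

variable {α : Type*} {K : α → α → ℝ≥0∞} {h : α → ℝ≥0∞} {C : ℝ≥0∞}

-- For symmetric `K`, `K a b * (f a * g b) = schurFactor K h f (a, b) * schurFactor K h g (b, a)`.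
def schurFactor (K : α → α → ℝ≥0∞) (h f : α → ℝ≥0∞) (p : α × α) : ℝ≥0∞ :=
  (K p.1 p.2 * h p.2 / h p.1) ^ (1 / 2 : ℝ) * f p.1

lemma tsum_schurFactor_sq_le (h0 : ∀ a, h a ≠ 0) (htop : ∀ a, h a ≠ ∞)
    (hC : ∀ a, ∑' b, K a b * h b ≤ C * h a) (f : α → ℝ≥0∞) :
    ∑' p, schurFactor K h f p ^ 2 ≤ C * ∑' a, f a ^ 2 :=
  calc ∑' p, schurFactor K h f p ^ 2
      = ∑' a, f a ^ 2 / h a * ∑' b, K a b * h b := by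
        rw [ENNReal.tsum_prod']
        refine tsum_congr fun a => ?_
        rw [← ENNReal.tsum_mul_left]
        refine tsum_congr fun b => ?_
        rw [schurFactor, mul_pow, ENNReal.rpow_one_half_sq, div_eq_mul_inv, div_eq_mul_inv]
        ring
    _ ≤ ∑' a, f a ^ 2 / h a * (C * h a) := by gcongr with a; exact hC a
    _ = C * ∑' a, f a ^ 2 := by
        rw [← ENNReal.tsum_mul_left]
        refine tsum_congr fun a => ?_
        rw [mul_left_comm, ENNReal.div_mul_cancel (h0 a) (htop a)]

theorem tsum_kernel_mul_le_of_schur [Countable α] (hK : ∀ a b, K a b = K b a)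
    (h0 : ∀ a, h a ≠ 0) (htop : ∀ a, h a ≠ ∞) (hC : ∀ a, ∑' b, K a b * h b ≤ C * h a)
    (f g : α → ℝ≥0∞) :
    ∑' p : α × α, K p.1 p.2 * (f p.1 * g p.2)
      ≤ C * ((∑' a, f a ^ 2) ^ (1 / 2 : ℝ) * (∑' a, g a ^ 2) ^ (1 / 2 : ℝ)) := by
  have hfactor : ∀ p : α × α,
      K p.1 p.2 * (f p.1 * g p.2) = schurFactor K h f p * schurFactor K h g p.swap := by
    rintro ⟨a, b⟩
    have hweights : K a b * h b / h a * (K b a * h a / h b) = K a b ^ 2 := by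
      rw [hK b a, div_eq_mul_inv, div_eq_mul_inv]
      calc _ = K a b ^ 2 * (h a * (h a)⁻¹) * (h b * (h b)⁻¹) := by ring
        _ = K a b ^ 2 := by
          rw [ENNReal.mul_inv_cancel (h0 a) (htop a), ENNReal.mul_inv_cancel (h0 b) (htop b),
            mul_one, mul_one]
    simp only [schurFactor, Prod.swap]
    rw [mul_mul_mul_comm, ← ENNReal.mul_rpow_of_nonneg _ _ (by norm_num), hweights,
      ENNReal.sq_rpow_one_half]
  have hswap : ∑' p : α × α, schurFactor K h g p.swap ^ 2 = ∑' p, schurFactor K h g p ^ 2 :=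
    (Equiv.prodComm α α).tsum_eq (fun p => schurFactor K h g p ^ 2)
  calc ∑' p : α × α, K p.1 p.2 * (f p.1 * g p.2)
      = ∑' p : α × α, schurFactor K h f p * schurFactor K h g p.swap := tsum_congr hfactor
    _ ≤ (∑' p, schurFactor K h f p ^ 2) ^ (1 / 2 : ℝ)
          * (∑' p : α × α, schurFactor K h g p.swap ^ 2) ^ (1 / 2 : ℝ) :=
        ENNReal.tsum_mul_le_tsum_sq_rpow_mul _ _
    _ ≤ (C * ∑' a, f a ^ 2) ^ (1 / 2 : ℝ) * (C * ∑' a, g a ^ 2) ^ (1 / 2 : ℝ) := by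
        rw [hswap]
        gcongr
        · exact tsum_schurFactor_sq_le h0 htop hC f
        · exact tsum_schurFactor_sq_le h0 htop hC g
    _ = C * ((∑' a, f a ^ 2) ^ (1 / 2 : ℝ) * (∑' a, g a ^ 2) ^ (1 / 2 : ℝ)) := by
        rw [ENNReal.mul_rpow_of_nonneg _ _ (by norm_num),
          ENNReal.mul_rpow_of_nonneg _ _ (by norm_num), mul_mul_mul_comm, ← sq,
          ENNReal.rpow_one_half_sq]

end Schur

-- The increments of `k ↦ √k / (√M + √k)` dominate the terms of `sum_range_inv_mul_inv_sqrt_le`: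
-- take `x = √M`, `y = √k`, `z = √(k + 1)`.
lemma sq_add_sq_inv_mul_inv_le {x y z : ℝ} (hx : 1 ≤ x) (hy : 0 ≤ y) (hz : 0 < z)
    (hzy : z ^ 2 = y ^ 2 + 1) :
    (x ^ 2 + y ^ 2)⁻¹ * z⁻¹ ≤ 8 / x * (z / (x + z) - y / (x + y)) := by
  have hyz : y < z := by nlinarith
  have hdiff : z / (x + z) - y / (x + y) = x / ((x + z) * (x + y) * (z + y)) := by
    field_simp
    nlinarith
  have key : (x + z) * (x + y) * (z + y) ≤ 8 * ((x ^ 2 + y ^ 2) * z) :=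
    calc (x + z) * (x + y) * (z + y) ≤ (x + z) ^ 2 * (2 * z) := by
          rw [sq]; gcongr; linarith
      _ ≤ 2 * (x ^ 2 + z ^ 2) * (2 * z) := by gcongr; nlinarith [sq_nonneg (x - z)]
      _ ≤ 8 * ((x ^ 2 + y ^ 2) * z) := by nlinarith
  rw [hdiff, ← mul_inv, div_mul_div_comm, inv_eq_one_div,
    div_le_div_iff₀ (by positivity) (by positivity)]
  nlinarith

lemma sum_range_inv_mul_inv_sqrt_le {M : ℝ} (hM : 1 ≤ M) (N : ℕ) :
    ∑ k ∈ Finset.range N, (M + k)⁻¹ * (√(1 + k))⁻¹ ≤ 8 / √M := by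
  set φ : ℕ → ℝ := fun k => √k / (√M + √k) with hφ
  have hsqrtM : 1 ≤ √M := Real.one_le_sqrt.mpr hM
  have hterm (k : ℕ) : (M + k)⁻¹ * (√(1 + k))⁻¹ ≤ 8 / √M * (φ (k + 1) - φ k) := by
    have h := sq_add_sq_inv_mul_inv_le hsqrtM (Real.sqrt_nonneg k)
      (Real.sqrt_pos.mpr (by positivity : (0 : ℝ) < k + 1))
      (by rw [Real.sq_sqrt (by positivity), Real.sq_sqrt (by positivity)])
    rw [Real.sq_sqrt (by linarith), Real.sq_sqrt (by positivity)] at h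
    simpa [hφ, add_comm] using h
  have hφN : φ N ≤ 1 := div_le_one_of_le₀ (by linarith) (by positivity)
  calc ∑ k ∈ Finset.range N, (M + k)⁻¹ * (√(1 + k))⁻¹
      ≤ ∑ k ∈ Finset.range N, 8 / √M * (φ (k + 1) - φ k) :=
        Finset.sum_le_sum fun k _ => hterm k
    _ = 8 / √M * φ N := by rw [← Finset.mul_sum, Finset.sum_range_sub]; simp [hφ]
    _ ≤ 8 / √M := mul_le_of_le_one_right (by positivity) hφN

lemma ENNReal.tsum_int_le_two_mul_tsum_nat {f : ℤ → ℝ≥0∞} (hf : ∀ b, f (-b) = f b) :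
    ∑' b, f b ≤ 2 * ∑' k : ℕ, f k := by
  rw [tsum_of_nat_of_neg_add_one ENNReal.summable ENNReal.summable, two_mul]
  refine add_le_add le_rfl ?_
  calc ∑' k : ℕ, f (-(k + 1 : ℤ)) = ∑' k : ℕ, f (k + 1 : ℕ) :=
        tsum_congr fun k => by rw [hf, Nat.cast_succ]
    _ ≤ ∑' k : ℕ, f k := ENNReal.tsum_comp_le_tsum_of_injective Nat.succ_injective (f ·)

def hilbertKernel (a b : ℤ) : ℝ≥0∞ := ENNReal.ofReal (1 + |(a : ℝ)| + |(b : ℝ)|)⁻¹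

def schurWeight (b : ℤ) : ℝ≥0∞ := ENNReal.ofReal (√(1 + |(b : ℝ)|))⁻¹

lemma hilbertKernel_comm (a b : ℤ) : hilbertKernel a b = hilbertKernel b a := by
  rw [hilbertKernel, hilbertKernel, add_right_comm]

lemma schurWeight_ne_zero (b : ℤ) : schurWeight b ≠ 0 := by
  rw [schurWeight, ne_eq, ENNReal.ofReal_eq_zero, not_le]
  positivity

lemma schurWeight_ne_top (b : ℤ) : schurWeight b ≠ ∞ := ENNReal.ofReal_ne_top

lemma tsum_hilbertKernel_mul_schurWeight_le (a : ℤ) :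
    ∑' b, hilbertKernel a b * schurWeight b ≤ 16 * schurWeight a := by
  have hM : 1 ≤ 1 + |(a : ℝ)| := le_add_of_nonneg_right (abs_nonneg _)
  calc ∑' b, hilbertKernel a b * schurWeight b
      ≤ 2 * ∑' k : ℕ, hilbertKernel a k * schurWeight k :=
        ENNReal.tsum_int_le_two_mul_tsum_nat fun b => by simp [hilbertKernel, schurWeight]
    _ = 2 * ∑' k : ℕ, ENNReal.ofReal ((1 + |(a : ℝ)| + k)⁻¹ * (√(1 + k))⁻¹) := by
        congr 1
        refine tsum_congr fun k => ?_
        rw [hilbertKernel, schurWeight, ← ENNReal.ofReal_mul (by positivity)]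
        simp
    _ ≤ 2 * ENNReal.ofReal (8 / √(1 + |(a : ℝ)|)) := by
        gcongr
        refine ENNReal.tsum_le_of_sum_range_le fun N => ?_
        rw [← ENNReal.ofReal_sum_of_nonneg fun k _ => by positivity]
        exact ENNReal.ofReal_le_ofReal (sum_range_inv_mul_inv_sqrt_le hM N)
    _ = 16 * schurWeight a := by
        rw [schurWeight, div_eq_mul_inv, ENNReal.ofReal_mul (by norm_num), ← mul_assoc]
        norm_num

theorem ENNReal.tsum_pi_prod_eq_prod_tsum {n : ℕ} {β : Fin n → Type*}
    (g : ∀ i, β i → ℝ≥0∞) : ∑' x : (∀ i, β i), ∏ i, g i (x i) = ∏ i, ∑' b, g i b := by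
  induction n with
  | zero => simp
  | succ n ih =>
    rw [← (Fin.consEquiv β).tsum_eq, ENNReal.tsum_prod', Fin.prod_univ_succ,
      ← ENNReal.tsum_mul_right, ← ih]
    refine tsum_congr fun b => ?_
    rw [← ENNReal.tsum_mul_left]
    refine tsum_congr fun x => ?_
    simp [Fin.consEquiv, Fin.prod_univ_succ]

theorem tsum_prod_mul_prod_le_pow_mul_prod {α : Type*} {k : α → α → ℝ≥0∞} {w : α → ℝ≥0∞}
    {C : ℝ≥0∞} (hC : ∀ a, ∑' b, k a b * w b ≤ C * w a) {n : ℕ} (ν : Fin n → α) :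
    ∑' μ : Fin n → α, (∏ i, k (ν i) (μ i)) * ∏ i, w (μ i) ≤ C ^ n * ∏ i, w (ν i) :=
  calc ∑' μ : Fin n → α, (∏ i, k (ν i) (μ i)) * ∏ i, w (μ i)
      = ∏ i, ∑' b, k (ν i) b * w b := by
        simp_rw [← Finset.prod_mul_distrib]
        exact ENNReal.tsum_pi_prod_eq_prod_tsum fun i b => k (ν i) b * w b
    _ ≤ ∏ i, C * w (ν i) := Finset.prod_le_prod' fun i _ => hC (ν i)
    _ = C ^ n * ∏ i, w (ν i) := by simp [Finset.prod_mul_distrib]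

lemma abs_le_zn {n : ℕ} (ν : Fin n → ℤ) (i : Fin n) : |(ν i : ℝ)| ≤ zn n ν := by
  rw [zn, ← Real.sqrt_sq_eq_abs]
  exact Real.sqrt_le_sqrt <| Finset.single_le_sum (f := fun j => (ν j : ℝ) ^ 2)
    (fun j _ => sq_nonneg _) (Finset.mem_univ i)

lemma ofReal_rpow_neg_le_prod_hilbertKernel {n : ℕ} (ν μ : Fin n → ℤ) :
    ENNReal.ofReal ((1 + zn n ν + zn n μ) ^ (-(n : ℝ))) ≤ ∏ i, hilbertKernel (ν i) (μ i) := by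
  have hν : 0 ≤ zn n ν := Real.sqrt_nonneg _
  have hμ : 0 ≤ zn n μ := Real.sqrt_nonneg _
  have hpos : 0 < 1 + zn n ν + zn n μ := by positivity
  rw [Real.rpow_neg hpos.le, Real.rpow_natCast, ← inv_pow, ENNReal.ofReal_pow (by positivity)]
  calc ENNReal.ofReal (1 + zn n ν + zn n μ)⁻¹ ^ n
      = ∏ _i : Fin n, ENNReal.ofReal (1 + zn n ν + zn n μ)⁻¹ := by simp
    _ ≤ ∏ i, hilbertKernel (ν i) (μ i) := by
        refine Finset.prod_le_prod' fun i _ => ENNReal.ofReal_le_ofReal ?_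
        gcongr
        · exact abs_le_zn ν i
        · exact abs_le_zn μ i

theorem statement8_general (n : ℕ) :
    ∃ C : ℝ≥0, ∀ A1 A2 : (Fin n → ℤ) → ℝ, (∀ ν, 0 ≤ A1 ν) → (∀ ν, 0 ≤ A2 ν) →
      (∑' ν : (Fin n → ℤ) × (Fin n → ℤ),
          ENNReal.ofReal ((1 + zn n ν.1 + zn n ν.2) ^ (-(n : ℝ))) *
            (ENNReal.ofReal (A1 ν.1) * ENNReal.ofReal (A2 ν.2)))
        ≤ C * ((∑' μ : Fin n → ℤ, ENNReal.ofReal (A1 μ) ^ 2) ^ (1 / 2 : ℝ) *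
            (∑' μ : Fin n → ℤ, ENNReal.ofReal (A2 μ) ^ 2) ^ (1 / 2 : ℝ)) := by
  refine ⟨16 ^ n, fun A1 A2 _ _ => ?_⟩
  have hrow : ∀ ν : Fin n → ℤ, ∑' μ : Fin n → ℤ,
      (∏ i, hilbertKernel (ν i) (μ i)) * ∏ i, schurWeight (μ i) ≤ 16 ^ n * ∏ i, schurWeight (ν i) :=
    tsum_prod_mul_prod_le_pow_mul_prod tsum_hilbertKernel_mul_schurWeight_le
  have hschur := tsum_kernel_mul_le_of_schur
    (fun ν μ => Finset.prod_congr rfl fun i _ => hilbertKernel_comm (ν i) (μ i))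
    (fun ν => Finset.prod_ne_zero_iff.2 fun i _ => schurWeight_ne_zero (ν i))
    (fun ν => ENNReal.prod_ne_top fun i _ => schurWeight_ne_top (ν i))
    hrow (fun μ => ENNReal.ofReal (A1 μ)) (fun μ => ENNReal.ofReal (A2 μ))
  refine le_trans (ENNReal.tsum_le_tsum fun ν => ?_) (le_of_le_of_eq hschur (by push_cast; rfl))
  gcongr
  exact ofReal_rpow_neg_le_prod_hilbertKernel ν.1 ν.2

/-- (Hilbert-type inequality; the case `N = 2` of Lemma 2.4.)
`Σ_{ν_1,ν_2} (1+|ν_1|+|ν_2|)^{−n} A_1(ν_1) A_2(ν_2) ≲ ‖A_1‖_{ℓ²(ℤ^n)} ‖A_2‖_{ℓ²(ℤ^n)}`. -/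
theorem statement8 (n : ℕ) (hn : 1 ≤ n) :
    ∃ C : ℝ≥0, ∀ A1 A2 : (Fin n → ℤ) → ℝ, (∀ ν, 0 ≤ A1 ν) → (∀ ν, 0 ≤ A2 ν) →
      (∑' ν : (Fin n → ℤ) × (Fin n → ℤ),
          ENNReal.ofReal ((1 + zn n ν.1 + zn n ν.2) ^ (-(n : ℝ))) *
            (ENNReal.ofReal (A1 ν.1) * ENNReal.ofReal (A2 ν.2)))
        ≤ C * ((∑' μ : Fin n → ℤ, ENNReal.ofReal (A1 μ) ^ 2) ^ (1 / 2 : ℝ) *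
            (∑' μ : Fin n → ℤ, ENNReal.ofReal (A2 μ) ^ 2) ^ (1 / 2 : ℝ)) :=
  statement8_general n

end
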